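/- arXiv:math/0408221 — 3 statements merged into one kernel-verified Lean document; each statement's English description precedes it below -/
import Mathlib

section
/- Let N be an odd positive integer, k an integer, ε ∈ {1, −1}, a₂ ∈ ℂ, and f : ℍ → ℂ. If f ∣[k] T = f, f ∣[k] H_N = ε • f, and f ∣[k] [[2,0],[0,1]] + f ∣[k] [[1,0],[0,2]] + f ∣[k] [[1,1],[0,2]] = a₂ • f, then f ∣[k] γ = f for all four matrices γ = [[2, δ₁],[δ₂ N, (δ₁δ₂N+1)/2]] with δ₁, δ₂ ∈ {1, −1}. -/
open Matrix UpperHalfPlane Complex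
open scoped ModularForm MatrixGroups

/-- The element of `GL(2, ℝ)⁺` with entries `[[a, b], [c, d]]` and positive determinant. -/
noncomputable def glp (a b c d : ℝ) (h : 0 < a * d - b * c) : GL(2, ℝ)⁺ :=
  ⟨Matrix.GeneralLinearGroup.mkOfDetNeZero !![a, b; c, d]
      (by rw [Matrix.det_fin_two_of]; exact ne_of_gt h),
   by
    rw [Matrix.mem_glpos]
    show (0:ℝ) < ((Matrix.GeneralLinearGroup.det _ : ℝˣ) : ℝ)
    rw [Matrix.GeneralLinearGroup.val_det_apply]
    show (0:ℝ) < Matrix.det !![a, b; c, d]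
    rw [Matrix.det_fin_two_of]; exact h⟩

/-!
Write `W = H_N` and `U = [[1,1],[0,2]]`. Conjugation by `W` swaps the first two terms
`[[2,0],[0,1]]` and `[[1,0],[0,2]]` of the Hecke relation, so slashing that relation by `W`
shows that `f ∣ U` is again a `W`-eigenfunction with eigenvalue `ε`. Since
`γ = [[2,-1],[-N,(N+1)/2]]` satisfies `γ U W = W U`, this gives `f ∣ γ = f`. The remaining three
matrices are `γ T`, the conjugate `W (γ T)⁻¹ W⁻¹`, and that conjugate times `T`.
-/

namespace SlashAction

variable {β G α : Type*} [Group G] [AddMonoid α] [SlashAction β G α]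

theorem slash_left_injective (k : β) (g : G) : Function.Injective fun a : α ↦ a ∣[k] g := by
  intro a b h
  simpa [← slash_mul] using congrArg (· ∣[k] g⁻¹) h

theorem slash_eq_self_of_slash_mul_eq {k : β} {a : α} {g x : G} (h : a ∣[k] (g * x) = a ∣[k] x) :
    a ∣[k] g = a :=
  slash_left_injective k x <| by rwa [slash_mul] at h

end SlashAction

open SlashAction

theorem coe_glp (a b c d : ℝ) (h) :
    ((glp a b c d h : GL (Fin 2) ℝ) : Matrix (Fin 2) (Fin 2) ℝ) = !![a, b; c, d] := rfl

theorem smul_slash_of_glpos (k : ℤ) (g : GL(2, ℝ)⁺) (f : ℍ → ℂ) (c : ℂ) :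
    (c • f) ∣[k] (g : GL (Fin 2) ℝ) = c • f ∣[k] (g : GL (Fin 2) ℝ) := by
  rw [ModularForm.smul_slash, σ, if_pos ((Matrix.mem_glpos _).1 g.2)]
  rfl

noncomputable def fricke (N : ℝ) (hN : 0 < N) : GL(2, ℝ)⁺ := glp 0 (-1) N 0 (by simpa using hN)

noncomputable def baseGamma (N δ₁ δ₂ : ℝ) : GL(2, ℝ)⁺ :=
  glp 2 δ₁ (δ₂ * N) ((δ₁ * δ₂ * N + 1) / 2) (by ring_nf; exact one_pos)

theorem baseGamma_one_eq_mul (N δ₂ : ℝ) :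
    (baseGamma N 1 δ₂ : GL (Fin 2) ℝ) = baseGamma N (-1) δ₂ * glp 1 1 0 1 (by norm_num) := by
  ext i j
  fin_cases i <;> fin_cases j <;> simp [baseGamma, coe_glp, Matrix.mul_apply] <;> ring

theorem slash_baseGamma_one {k : ℤ} {f : ℍ → ℂ} {N δ₂ : ℝ}
    (hT : f ∣[k] (glp 1 1 0 1 (by norm_num) : GL (Fin 2) ℝ) = f)
    (hγ : f ∣[k] (baseGamma N (-1) δ₂ : GL (Fin 2) ℝ) = f) :
    f ∣[k] (baseGamma N 1 δ₂ : GL (Fin 2) ℝ) = f := by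
  rw [baseGamma_one_eq_mul, slash_mul, hγ, hT]

section Fricke

variable {N : ℝ} (hN : 0 < N) {k : ℤ} {f : ℍ → ℂ} {ε : ℂ}

local notation "W" => (fricke N hN : GL (Fin 2) ℝ)

theorem slash_fricke_of_mul_fricke_eq {A : GL (Fin 2) ℝ} {B : GL(2, ℝ)⁺}
    (hAB : A * W = W * B) (hf : f ∣[k] W = ε • f) :
    (f ∣[k] A) ∣[k] W = ε • f ∣[k] (B : GL (Fin 2) ℝ) := by
  rw [← slash_mul, hAB, slash_mul, hf, smul_slash_of_glpos]

theorem slash_hecke_third_fricke {a : ℂ} (hf : f ∣[k] W = ε • f)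
    (hT₂ : f ∣[k] (glp 2 0 0 1 (by norm_num) : GL (Fin 2) ℝ)
      + f ∣[k] (glp 1 0 0 2 (by norm_num) : GL (Fin 2) ℝ)
      + f ∣[k] (glp 1 1 0 2 (by norm_num) : GL (Fin 2) ℝ) = a • f) :
    (f ∣[k] (glp 1 1 0 2 (by norm_num) : GL (Fin 2) ℝ)) ∣[k] W
      = ε • f ∣[k] (glp 1 1 0 2 (by norm_num) : GL (Fin 2) ℝ) := by
  have h₁ := slash_fricke_of_mul_fricke_eq hN (A := glp 2 0 0 1 (by norm_num))
    (B := glp 1 0 0 2 (by norm_num)) (by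
      ext i j; fin_cases i <;> fin_cases j <;> simp [fricke, coe_glp, Matrix.mul_apply]) hf
  have h₂ := slash_fricke_of_mul_fricke_eq hN (A := glp 1 0 0 2 (by norm_num))
    (B := glp 2 0 0 1 (by norm_num)) (by
      ext i j; fin_cases i <;> fin_cases j <;> simp [fricke, coe_glp, Matrix.mul_apply, mul_comm]) hf
  have hsum := congrArg (· ∣[k] W) hT₂
  simp only [add_slash, h₁, h₂, smul_slash_of_glpos, hf] at hsum
  linear_combination (norm := module) hsum - ε • hT₂

theorem slash_baseGamma_neg_neg
    (hU : (f ∣[k] (glp 1 1 0 2 (by norm_num) : GL (Fin 2) ℝ)) ∣[k] W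
      = ε • f ∣[k] (glp 1 1 0 2 (by norm_num) : GL (Fin 2) ℝ)) (hf : f ∣[k] W = ε • f) :
    f ∣[k] (baseGamma N (-1) (-1) : GL (Fin 2) ℝ) = f := by
  set U : GL (Fin 2) ℝ := (glp 1 1 0 2 (by norm_num) : GL (Fin 2) ℝ)
  refine slash_eq_self_of_slash_mul_eq (x := U * W) ?_
  have hγ : (baseGamma N (-1) (-1) : GL (Fin 2) ℝ) * (U * W) = W * U := by
    ext i j
    fin_cases i <;> fin_cases j <;> simp [U, baseGamma, fricke, coe_glp, Matrix.mul_apply]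
    ring
  rw [hγ, slash_mul, hf, smul_slash_of_glpos, slash_mul, hU]

theorem slash_baseGamma_neg_one_one (hf : f ∣[k] W = ε • f)
    (hγ : f ∣[k] (baseGamma N 1 (-1) : GL (Fin 2) ℝ) = f) :
    f ∣[k] (baseGamma N (-1) 1 : GL (Fin 2) ℝ) = f := by
  refine slash_eq_self_of_slash_mul_eq (x := W * baseGamma N 1 (-1)) ?_
  have hconj : (baseGamma N (-1) 1 : GL (Fin 2) ℝ) * (W * baseGamma N 1 (-1)) = W := by
    ext i j
    fin_cases i <;> fin_cases j <;> simp [baseGamma, fricke, coe_glp, Matrix.mul_apply] <;>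
      ring
  rw [hconj, slash_mul, hf, smul_slash_of_glpos, hγ]

theorem slash_baseGamma_eq_self {a : ℂ}
    (hT : f ∣[k] (glp 1 1 0 1 (by norm_num) : GL (Fin 2) ℝ) = f) (hf : f ∣[k] W = ε • f)
    (hT₂ : f ∣[k] (glp 2 0 0 1 (by norm_num) : GL (Fin 2) ℝ)
      + f ∣[k] (glp 1 0 0 2 (by norm_num) : GL (Fin 2) ℝ)
      + f ∣[k] (glp 1 1 0 2 (by norm_num) : GL (Fin 2) ℝ) = a • f)
    {δ₁ δ₂ : ℝ} (hδ₁ : δ₁ = 1 ∨ δ₁ = -1) (hδ₂ : δ₂ = 1 ∨ δ₂ = -1) :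
    f ∣[k] (baseGamma N δ₁ δ₂ : GL (Fin 2) ℝ) = f := by
  have hnn := slash_baseGamma_neg_neg hN (slash_hecke_third_fricke hN hf hT₂) hf
  have hpn := slash_baseGamma_one hT hnn
  have hnp := slash_baseGamma_neg_one_one hN hf hpn
  rcases hδ₁ with rfl | rfl <;> rcases hδ₂ with rfl | rfl
  exacts [slash_baseGamma_one hT hnp, hpn, hnp, hnn]

end Fricke

/-- If `f ∣[k] T = f`, `f ∣[k] H_N = ε • f` and
`f ∣[k] [[2,0],[0,1]] + f ∣[k] [[1,0],[0,2]] + f ∣[k] [[1,1],[0,2]] = a₂ • f`,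
then `f ∣[k] [[2, δ₁],[δ₂ N, (δ₁ δ₂ N + 1)/2]] = f` for all `δ₁, δ₂ ∈ {1, -1}`. -/
theorem slash_base_case (N : ℕ) (hN : 0 < N) (k : ℤ) (ε : ℂ) (a₂ : ℂ) (f : ℍ → ℂ)
    (hT : f ∣[k] (glp 1 1 0 1 (by norm_num) : GL (Fin 2) ℝ) = f)
    (hH : f ∣[k] (glp 0 (-1) (N:ℝ) 0
        (by simpa using (by exact_mod_cast hN : (0:ℝ) < N)) : GL (Fin 2) ℝ) = ε • f)
    (hT2 : f ∣[k] (glp 2 0 0 1 (by norm_num) : GL (Fin 2) ℝ) + f ∣[k] (glp 1 0 0 2 (by norm_num) : GL (Fin 2) ℝ)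
        + f ∣[k] (glp 1 1 0 2 (by norm_num) : GL (Fin 2) ℝ) = a₂ • f) :
    ∀ δ₁ δ₂ : ℤ, (δ₁ = 1 ∨ δ₁ = -1) → (δ₂ = 1 ∨ δ₂ = -1) →
      f ∣[k] (glp 2 (δ₁:ℝ) ((δ₂:ℝ) * (N:ℝ)) (((δ₁:ℝ) * (δ₂:ℝ) * (N:ℝ) + 1)/2)
        (by
          have h : (2:ℝ) * (((δ₁:ℝ) * (δ₂:ℝ) * (N:ℝ) + 1)/2)
              - (δ₁:ℝ) * ((δ₂:ℝ) * (N:ℝ)) = 1 := by ring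
          linarith) : GL (Fin 2) ℝ) = f := by
  intro δ₁ δ₂ hδ₁ hδ₂
  exact slash_baseGamma_eq_self (by exact_mod_cast hN) hT hH hT2
    (by exact_mod_cast hδ₁) (by exact_mod_cast hδ₂)
end

section
/- Let N be an odd positive integer, k an integer, ε ∈ {1, −1}, a₂ ∈ ℂ, and f : ℍ → ℂ. If f ∣[k] T = f, f ∣[k] H_N = ε • f, and f ∣[k] [[2,0],[0,1]] + f ∣[k] [[1,0],[0,2]] + f ∣[k] [[1,1],[0,2]] = a₂ • f, then f ∣[k] [[4, −2],[−N, (N+1)/2]] + f ∣[k] [[2−N, (N−1)/2],[−2N, N+1]] = f ∣[k] [[1,0],[0,2]] + f ∣[k] [[1,1],[0,2]]. -/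
open Matrix UpperHalfPlane Complex
open scoped ModularForm MatrixGroups

/-! Conjugation by `H_N` swaps `[[2,0],[0,1]]` and `[[1,0],[0,2]]` and turns `[[1,1],[0,2]]` into
`C = [[2,0],[-N,1]]`, so the Hecke relation, slashed by `H_N`, gives `f ∣ C = f ∣ [[1,1],[0,2]]`:
`f` is invariant under `G = C [[1,1],[0,2]]⁻¹ = [[2,-1],[-N,(N+1)/2]]`. Now slash the Hecke relation
by `G`. The products `[[2,0],[0,1]] G` and `[[1,1],[0,2]] G` are the two matrices of the claim, while
`[[1,0],[0,2]] G = H_N T D` and `[[2,0],[0,1]] = T H_N D` for `D = [[0,1/N],[-2,1]]`; since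
`f ∣ H_N T = ε f = f ∣ T H_N`, the middle term is again `f ∣ [[2,0],[0,1]]`. -/

lemma glp_mul_glp (a b c d a' b' c' d' : ℝ) (h : 0 < a * d - b * c) (h' : 0 < a' * d' - b' * c') :
    glp a b c d h * glp a' b' c' d' h' =
      glp (a * a' + b * c') (a * b' + b * d') (c * a' + d * c') (c * b' + d * d')
        (by linarith [mul_pos h h']) := by
  ext1; ext1
  exact Matrix.mul_fin_two ..

noncomputable instance : SlashAction ℤ GL(2, ℝ)⁺ (ℍ → ℂ) :=
  monoidHomSlashAction (Matrix.GLPos (Fin 2) ℝ).subtype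

lemma slash_coe_glpos (k : ℤ) (g : GL(2, ℝ)⁺) (f : ℍ → ℂ) :
    f ∣[k] (g : GL (Fin 2) ℝ) = f ∣[k] g :=
  rfl

lemma glpos_smul_slash (k : ℤ) (g : GL(2, ℝ)⁺) (f : ℍ → ℂ) (c : ℂ) :
    (c • f) ∣[k] g = c • f ∣[k] g := by
  change (c • f) ∣[k] (g : GL (Fin 2) ℝ) = c • f ∣[k] (g : GL (Fin 2) ℝ)
  have hg : 0 < (g : GL (Fin 2) ℝ).det.val := Matrix.mem_glpos _ |>.mp g.2
  rw [ModularForm.smul_slash, σ, if_pos hg]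
  rfl

section

variable {k : ℤ} {f : ℍ → ℂ} {ε : ℂ}

lemma slash_slash_of_mul_eq_mul {g g' h : GL(2, ℝ)⁺} (hh : f ∣[k] h = ε • f)
    (hgh : g * h = h * g') : (f ∣[k] g) ∣[k] h = ε • f ∣[k] g' := by
  rw [← SlashAction.slash_mul, hgh, SlashAction.slash_mul, hh, glpos_smul_slash]

lemma sum_slash_eq_smul_of_mul_eq_mul {ι : Type*} [Fintype ι] {g g' : ι → GL(2, ℝ)⁺}
    {h : GL(2, ℝ)⁺} {a : ℂ} (hε : ε ≠ 0) (hh : f ∣[k] h = ε • f)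
    (hgh : ∀ i, g i * h = h * g' i) (hf : ∑ i, f ∣[k] g i = a • f) :
    ∑ i, f ∣[k] g' i = a • f := by
  have := congrArg (· ∣[k] h) hf
  simp only [SlashAction.sum_slash, glpos_smul_slash, hh, slash_slash_of_mul_eq_mul hh (hgh _),
    ← Finset.smul_sum] at this
  rw [smul_comm] at this
  exact smul_right_injective _ hε this

lemma slash_mul_left_comm {t h g : GL(2, ℝ)⁺} (ht : f ∣[k] t = f) (hh : f ∣[k] h = ε • f) :
    f ∣[k] (h * (t * g)) = f ∣[k] (t * (h * g)) := by
  simp only [SlashAction.slash_mul, ht, hh, glpos_smul_slash]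

lemma add_slash_mul_eq_of_slash_eq_self {a : ℂ} {a₁ a₂ b g : GL(2, ℝ)⁺}
    (hg : f ∣[k] g = f) (hswap : f ∣[k] (a₂ * g) = f ∣[k] a₁)
    (hf : f ∣[k] a₁ + f ∣[k] a₂ + f ∣[k] b = a • f) :
    f ∣[k] (a₁ * g) + f ∣[k] (b * g) = f ∣[k] a₂ + f ∣[k] b := by
  have := congrArg (· ∣[k] g) hf
  simp only [SlashAction.add_slash, glpos_smul_slash, hg, ← SlashAction.slash_mul, hswap] at this
  linear_combination (norm := module) this - hf

variable {a₂ : ℂ} {N : ℝ}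

lemma slash_eq_self_of_hecke_two (hN : 0 < N) (hε : ε ≠ 0)
    (hH : f ∣[k] glp 0 (-1) N 0 (by linarith) = ε • f)
    (hT2 : f ∣[k] glp 2 0 0 1 (by norm_num) + f ∣[k] glp 1 0 0 2 (by norm_num)
      + f ∣[k] glp 1 1 0 2 (by norm_num) = a₂ • f) :
    f ∣[k] glp 2 (-1) (-N) ((N + 1) / 2) (by linarith) = f := by
  have hC : f ∣[k] glp 2 0 (-N) 1 (by norm_num) = f ∣[k] glp 1 1 0 2 (by norm_num) := by
    have := sum_slash_eq_smul_of_mul_eq_mul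
      (g := ![glp 2 0 0 1 (by norm_num), glp 1 0 0 2 (by norm_num), glp 1 1 0 2 (by norm_num)])
      (g' := ![glp 1 0 0 2 (by norm_num), glp 2 0 0 1 (by norm_num), glp 2 0 (-N) 1 (by norm_num)])
      hε hH (fun i => by
        fin_cases i <;>
        · simp only [Fin.zero_eta, Fin.mk_one, Fin.reduceFinMk, Matrix.cons_val,
            Matrix.cons_val_zero, Matrix.cons_val_one, glp_mul_glp]
          congr 1 <;> ring)
      (by simpa [Fin.sum_univ_three] using hT2)
    simp only [Fin.sum_univ_three, Matrix.cons_val] at this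
    linear_combination (norm := module) this - hT2
  have hG : glp 2 (-1) (-N) ((N + 1) / 2) (by linarith) =
      glp 2 0 (-N) 1 (by norm_num) * (glp 1 1 0 2 (by norm_num))⁻¹ :=
    eq_mul_inv_of_mul_eq (by simp only [glp_mul_glp]; congr 1 <;> ring)
  rw [hG, SlashAction.slash_mul, hC, ← SlashAction.slash_mul, mul_inv_cancel,
    SlashAction.slash_one]

lemma slash_mul_eq_slash_of_transl_fricke (hN : 0 < N)
    (hT : f ∣[k] glp 1 1 0 1 (by norm_num) = f)
    (hH : f ∣[k] glp 0 (-1) N 0 (by linarith) = ε • f) :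
    f ∣[k] (glp 1 0 0 2 (by norm_num) * glp 2 (-1) (-N) ((N + 1) / 2) (by linarith)) =
      f ∣[k] glp 2 0 0 1 (by norm_num) := by
  let D := glp 0 (1 / N) (-2) 1 (by field_simp; linarith)
  calc _ = f ∣[k] (glp 0 (-1) N 0 (by linarith) * (glp 1 1 0 1 (by norm_num) * D)) := by
        simp only [D, glp_mul_glp]; congr 2 <;> field_simp <;> ring
    _ = f ∣[k] (glp 1 1 0 1 (by norm_num) * (glp 0 (-1) N 0 (by linarith) * D)) :=
        slash_mul_left_comm hT hH
    _ = _ := by simp only [D, glp_mul_glp]; congr 2 <;> field_simp <;> ring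

end

/-- If `f ∣[k] T = f`, `f ∣[k] H_N = ε • f` and
`f ∣[k] [[2,0],[0,1]] + f ∣[k] [[1,0],[0,2]] + f ∣[k] [[1,1],[0,2]] = a₂ • f`, then
`f ∣[k] [[4, -2],[-N, (N+1)/2]] + f ∣[k] [[2-N, (N-1)/2],[-2N, N+1]]
  = f ∣[k] [[1,0],[0,2]] + f ∣[k] [[1,1],[0,2]]`. -/
theorem slash_four_matrices (N : ℕ) (hN : 0 < N) (k : ℤ) (ε : ℂ)
    (hε : ε = 1 ∨ ε = -1) (a₂ : ℂ) (f : ℍ → ℂ)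
    (hT : f ∣[k] (glp 1 1 0 1 (by norm_num) : GL (Fin 2) ℝ) = f)
    (hH : f ∣[k] (glp 0 (-1) (N:ℝ) 0
        (by simpa using (by exact_mod_cast hN : (0:ℝ) < N)) : GL (Fin 2) ℝ) = ε • f)
    (hT2 : f ∣[k] (glp 2 0 0 1 (by norm_num) : GL (Fin 2) ℝ) + f ∣[k] (glp 1 0 0 2 (by norm_num) : GL (Fin 2) ℝ)
        + f ∣[k] (glp 1 1 0 2 (by norm_num) : GL (Fin 2) ℝ) = a₂ • f) :
    f ∣[k] (glp 4 (-2) (-(N:ℝ)) (((N:ℝ) + 1)/2)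
        (by
          have h : (4:ℝ) * (((N:ℝ) + 1)/2) - (-2) * (-(N:ℝ)) = 2 := by ring
          linarith) : GL (Fin 2) ℝ)
      + f ∣[k] (glp (2 - (N:ℝ)) (((N:ℝ) - 1)/2) (-2 * (N:ℝ)) ((N:ℝ) + 1)
        (by
          have h : (2 - (N:ℝ)) * ((N:ℝ) + 1) - (((N:ℝ) - 1)/2) * (-2 * (N:ℝ)) = 2 := by ring
          linarith) : GL (Fin 2) ℝ)
      = f ∣[k] (glp 1 0 0 2 (by norm_num) : GL (Fin 2) ℝ) + f ∣[k] (glp 1 1 0 2 (by norm_num) : GL (Fin 2) ℝ) := by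
  have hN' : (0 : ℝ) < N := by exact_mod_cast hN
  have hε' : ε ≠ 0 := by rcases hε with rfl | rfl <;> norm_num
  simp only [slash_coe_glpos] at hT hH hT2 ⊢
  have key := add_slash_mul_eq_of_slash_eq_self (slash_eq_self_of_hecke_two hN' hε' hH hT2)
    (slash_mul_eq_slash_of_transl_fricke hN' hT hH) hT2
  rw [glp_mul_glp, glp_mul_glp] at key
  convert key using 4 <;> ring
end

section
/- Let N be an odd positive integer and assume the weak Artin hypothesis. Then every γ ∈ Γ_{0,2}(N) can be written as γ = W_N^k · δ₁^{−1} · δ₂ · W_N^ℓ for some integers k, ℓ and some δ₁, δ₂ ∈ G_{0,2}(N). -/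
/-!
Write `γ = [[a, b], [c, d]]`. Right multiplication by `W_N^ℓ` replaces the first column by
`(A, x) = (a + ℓNb, c + ℓNd)`, and the weak Artin hypothesis (with modulus `a + ℓ·Nb`) chooses `ℓ`
so that `-b` is a power of `2` modulo `A`. As `Ad - bx = 1`, `x` is then inverse to a power of `2`
modulo `A`, hence itself a power of `2` modulo `A`, the unit group of `ℤ/A` being finite.
Left multiplication by `W_N^k` and then by some `δ₁ ∈ G_{0,2}(N)` with first row `(2^t, 1)` turns
the upper-left entry into `2^t A + x + kNA`; since `N ∣ x` and `A ≡ 2^j (mod N)` is prime to `N`,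
the Chinese remainder theorem provides `t` and `k` for which this is exactly a power of `2`.
-/

open Matrix CongruenceSubgroup
open scoped MatrixGroups

/-- The matrix `W_N = [[1,0],[N,1]]` in `SL(2, ℤ)`. -/
def W (N : ℕ) : SL(2, ℤ) := ⟨!![1, 0; (N:ℤ), 1], by norm_num [Matrix.det_fin_two_of]⟩

/-- `Γ_{0,2}(N)`: matrices in `Γ₀(N)` whose upper-left entry is congruent to a power of `2`
modulo `N`. -/
def Gamma02 (N : ℕ) : Set SL(2, ℤ) :=
  {γ | γ ∈ Gamma0 N ∧ ∃ j : ℕ, (γ : Matrix (Fin 2) (Fin 2) ℤ) 0 0 ≡ 2^j [ZMOD (N:ℤ)]}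

/-- `G_{0,2}(N)`: matrices in `Γ₀(N)` whose upper-left entry is a power of `2`. -/
def G02 (N : ℕ) : Set SL(2, ℤ) :=
  {γ | γ ∈ Gamma0 N ∧ ∃ n : ℕ, (γ : Matrix (Fin 2) (Fin 2) ℤ) 0 0 = 2^n}

/-- The weak form of Artin's conjecture on primitive roots: if `gcd(d, bM) = 1` then
`b ≡ 2^n (mod d + mM)` for some integer `m` and some nonnegative integer `n`. -/
def WeakArtin : Prop :=
  ∀ b d M : ℤ, Int.gcd d (b * M) = 1 → ∃ (m : ℤ) (n : ℕ), b ≡ 2^n [ZMOD (d + m * M)]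

theorem exists_pow_eq_of_pow_mul_eq_one {M : Type*} [CommMonoid M] [Finite Mˣ] {g x : M} {s : ℕ}
    (h : g ^ s * x = 1) : ∃ t : ℕ, g ^ t = x := by
  obtain ⟨v, hv⟩ := IsUnit.of_mul_eq_one x h
  have hv_inv : v ^ (orderOf v - 1) * v = 1 := by
    rw [← pow_succ, Nat.sub_add_cancel (orderOf_pos v), pow_orderOf_eq_one]
  refine ⟨s * (orderOf v - 1), ?_⟩
  calc g ^ (s * (orderOf v - 1)) = ↑(v ^ (orderOf v - 1)) * (g ^ s * x) := by
        rw [h, mul_one, pow_mul, ← hv, Units.val_pow_eq_pow_val]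
    _ = x := by rw [← hv, ← mul_assoc, ← Units.val_mul, hv_inv, Units.val_one, one_mul]

theorem Int.exists_modEq_pow_of_pow_mul_modEq_one {m g x : ℤ} {s : ℕ}
    (h : g ^ s * x ≡ 1 [ZMOD m]) : ∃ t : ℕ, x ≡ g ^ t [ZMOD m] := by
  rw [← Int.modEq_natAbs, ← ZMod.intCast_eq_intCast_iff] at h
  push_cast at h
  obtain ⟨t, ht⟩ := exists_pow_eq_of_pow_mul_eq_one h
  refine ⟨t, ?_⟩
  rw [← Int.modEq_natAbs, ← ZMod.intCast_eq_intCast_iff]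
  push_cast
  exact ht.symm

theorem Int.exists_pow_mul_pow_modEq {m g : ℤ} (hg : IsCoprime g m) (j n : ℕ) :
    ∃ t : ℕ, g ^ t * g ^ j ≡ g ^ n [ZMOD m] := by
  obtain ⟨u, v, huv⟩ := hg.pow_left (m := j)
  have hu : g ^ j * u ≡ 1 [ZMOD m] := Int.modEq_iff_dvd.mpr ⟨v, by linear_combination -huv⟩
  obtain ⟨t, ht⟩ := Int.exists_modEq_pow_of_pow_mul_modEq_one hu
  refine ⟨n + t, ?_⟩
  calc g ^ (n + t) * g ^ j = g ^ n * (g ^ j * g ^ t) := by ring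
    _ ≡ g ^ n * (g ^ j * u) [ZMOD m] := (ht.symm.mul_left _).mul_left _
    _ ≡ g ^ n * 1 [ZMOD m] := hu.mul_left _
    _ = g ^ n := mul_one _

theorem Int.ModEq.isCoprime {m a b : ℤ} (h : a ≡ b [ZMOD m]) (hb : IsCoprime b m) :
    IsCoprime a m := by
  obtain ⟨t, ht⟩ := h.dvd
  rw [show a = b + m * -t by linear_combination -ht]
  exact hb.add_mul_left_left _

theorem W_mem_Gamma0 (N : ℕ) : W N ∈ Gamma0 N := by
  rw [Gamma0_mem]; simp [W]

theorem coe_W_zpow (N : ℕ) (k : ℤ) :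
    ((W N ^ k : SL(2, ℤ)) : Matrix (Fin 2) (Fin 2) ℤ) = !![1, 0; k * N, 1] := by
  induction k with
  | zero => simp [Matrix.one_fin_two]
  | succ n h =>
    simp_rw [_root_.zpow_add, zpow_one, Matrix.SpecialLinearGroup.coe_mul, h, W, Matrix.mul_fin_two]
    ext i j; fin_cases i <;> fin_cases j <;> simp; ring
  | pred n h =>
    simp_rw [_root_.zpow_sub, zpow_one, Matrix.SpecialLinearGroup.coe_mul, h,
      Matrix.SpecialLinearGroup.coe_inv, W, Matrix.adjugate_fin_two_of, Matrix.mul_fin_two]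
    ext i j; fin_cases i <;> fin_cases j <;> simp; ring

section Entries

variable (N : ℕ) (k : ℤ) (γ : SL(2, ℤ))

theorem W_zpow_mul_apply_zero_zero : (W N ^ k * γ) 0 0 = γ 0 0 := by
  simp [Matrix.SpecialLinearGroup.coe_mul, coe_W_zpow, Matrix.mul_apply, Fin.sum_univ_two]

theorem W_zpow_mul_apply_one_zero : (W N ^ k * γ) 1 0 = γ 1 0 + k * N * γ 0 0 := by
  simp [Matrix.SpecialLinearGroup.coe_mul, coe_W_zpow, Matrix.mul_apply, Fin.sum_univ_two]
  ring

theorem mul_W_zpow_apply_zero_zero : (γ * W N ^ k) 0 0 = γ 0 0 + k * N * γ 0 1 := by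
  simp [Matrix.SpecialLinearGroup.coe_mul, coe_W_zpow, Matrix.mul_apply, Fin.sum_univ_two]
  ring

theorem mul_W_zpow_apply_zero_one : (γ * W N ^ k) 0 1 = γ 0 1 := by
  simp [Matrix.SpecialLinearGroup.coe_mul, coe_W_zpow, Matrix.mul_apply, Fin.sum_univ_two]

end Entries

theorem exists_mem_G02_apply_zero {N : ℕ} (hN : Odd N) (n : ℕ) :
    ∃ δ ∈ G02 N, δ 0 0 = 2 ^ n ∧ δ 0 1 = 1 := by
  obtain ⟨u, v, huv⟩ := (Int.isCoprime_two_left.mpr hN.natCast).pow_left (m := n)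
  refine ⟨⟨!![2 ^ n, 1; -(v * N), u], ?_⟩, ⟨Gamma0_mem.mpr (by simp), n, rfl⟩, rfl, rfl⟩
  rw [Matrix.det_fin_two_of]; linear_combination huv

theorem exists_mul_W_zpow_apply_modEq_two_pow (hArtin : WeakArtin) {N : ℕ} {γ : SL(2, ℤ)}
    (ha : IsCoprime (γ 0 0) N) :
    ∃ (ℓ : ℤ) (n : ℕ), (γ * W N ^ ℓ) 1 0 ≡ 2 ^ n [ZMOD (γ * W N ^ ℓ) 0 0] := by
  have hab : IsCoprime (γ 0 0) (γ 0 1) := ⟨γ 1 1, -γ 1 0, by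
    linear_combination (Matrix.det_fin_two (γ : Matrix (Fin 2) (Fin 2) ℤ)).symm.trans γ.2⟩
  obtain ⟨ℓ, n, hb⟩ := hArtin (-γ 0 1) (γ 0 0) (N * γ 0 1)
    (Int.isCoprime_iff_gcd_eq_one.mp (hab.neg_right.mul_right (ha.mul_right hab)))
  set γ' := γ * W N ^ ℓ
  have hdet : γ' 0 0 * γ' 1 1 - γ 0 1 * γ' 1 0 = 1 := by
    rw [← mul_W_zpow_apply_zero_one N ℓ γ, ← Matrix.det_fin_two]; exact γ'.2
  rw [show γ 0 0 + ℓ * (N * γ 0 1) = γ' 0 0 by rw [mul_W_zpow_apply_zero_zero]; ring] at hb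
  refine ⟨ℓ, Int.exists_modEq_pow_of_pow_mul_modEq_one (s := n) ?_⟩
  calc 2 ^ n * γ' 1 0 ≡ -γ 0 1 * γ' 1 0 [ZMOD γ' 0 0] := hb.symm.mul_right _
    _ = 1 - γ' 0 0 * γ' 1 1 := by linear_combination hdet
    _ ≡ 1 [ZMOD γ' 0 0] := Int.modEq_iff_dvd.mpr ⟨γ' 1 1, by ring⟩

theorem exists_mem_G02_mul_W_zpow_mul_mem_G02 {N : ℕ} (hN : Odd N) {γ : SL(2, ℤ)}
    (hγ : γ ∈ Gamma0 N) {j n : ℕ} (ha : γ 0 0 ≡ 2 ^ j [ZMOD N])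
    (hc : γ 1 0 ≡ 2 ^ n [ZMOD γ 0 0]) :
    ∃ (k : ℤ) (δ : SL(2, ℤ)), δ ∈ G02 N ∧ δ * (W N ^ k * γ) ∈ G02 N := by
  have h2 : IsCoprime (2 : ℤ) N := Int.isCoprime_two_left.mpr hN.natCast
  have hcN : (N : ℤ) ∣ γ 1 0 := (ZMod.intCast_zmod_eq_zero_iff_dvd _ N).mp (Gamma0_mem.mp hγ)
  obtain ⟨t, ht⟩ := Int.exists_pow_mul_pow_modEq h2 j n
  have hA : γ 0 0 ∣ 2 ^ n - 2 ^ t * γ 0 0 - γ 1 0 := by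
    rw [sub_right_comm]; exact hc.dvd.sub (dvd_mul_left _ _)
  have hN' : (N : ℤ) ∣ 2 ^ n - 2 ^ t * γ 0 0 - γ 1 0 :=
    ((ha.mul_left _).trans ht).dvd.sub hcN
  obtain ⟨k, hk⟩ := (ha.isCoprime h2.pow_left).mul_dvd hA hN'
  obtain ⟨δ, hδ, hδ0, hδ1⟩ := exists_mem_G02_apply_zero hN t
  refine ⟨k, δ, hδ, mul_mem hδ.1 (mul_mem (zpow_mem (W_mem_Gamma0 N) k) hγ), n, ?_⟩
  rw [Matrix.SpecialLinearGroup.coe_mul, Matrix.mul_apply, Fin.sum_univ_two,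
    W_zpow_mul_apply_zero_zero, W_zpow_mul_apply_one_zero, hδ0, hδ1]
  linear_combination -hk

theorem Gamma02_decomposition_general (N : ℕ) (hNodd : Odd N) (hArtin : WeakArtin) :
    ∀ γ ∈ Gamma02 N, ∃ (k l : ℤ) (δ₁ δ₂ : SL(2, ℤ)), δ₁ ∈ G02 N ∧ δ₂ ∈ G02 N ∧
      γ = (W N)^k * δ₁⁻¹ * δ₂ * (W N)^l := by
  rintro γ ⟨hγ, j, hj⟩
  have h2 : IsCoprime (2 : ℤ) N := Int.isCoprime_two_left.mpr hNodd.natCast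
  obtain ⟨ℓ, n, hc⟩ := exists_mul_W_zpow_apply_modEq_two_pow hArtin (hj.isCoprime h2.pow_left)
  have ha : (γ * W N ^ ℓ) 0 0 ≡ 2 ^ j [ZMOD N] := by
    rw [mul_W_zpow_apply_zero_zero]
    exact (Int.modEq_iff_dvd.mpr ⟨-(ℓ * γ 0 1), by ring⟩).trans hj
  obtain ⟨k, δ, hδ, hδ'⟩ := exists_mem_G02_mul_W_zpow_mul_mem_G02 hNodd
    (mul_mem hγ (zpow_mem (W_mem_Gamma0 N) ℓ)) ha hc
  exact ⟨-k, -ℓ, δ, _, hδ, hδ', by group⟩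

/-- Assuming the weak Artin hypothesis, every `γ ∈ Γ_{0,2}(N)` has the form
`W_N^k δ₁⁻¹ δ₂ W_N^ℓ` with `δ₁, δ₂ ∈ G_{0,2}(N)`. -/
theorem Gamma02_decomposition (N : ℕ) (hN : 0 < N) (hNodd : Odd N) (hArtin : WeakArtin) :
    ∀ γ ∈ Gamma02 N, ∃ (k l : ℤ) (δ₁ δ₂ : SL(2, ℤ)), δ₁ ∈ G02 N ∧ δ₂ ∈ G02 N ∧
      γ = (W N)^k * δ₁⁻¹ * δ₂ * (W N)^l :=
  Gamma02_decomposition_general N hNodd hArtin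
end
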